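/- arXiv:math/0304442 — 2 statements merged into one kernel-verified Lean document; each statement's English description precedes it below -/
import Mathlib

section
/- Suppose the pushout product axiom holds in a monoidal model category (M, ⊗, 𝟙), and suppose that for every cofibrant object Z with a weak equivalence Z → 𝟙 and every cofibrant X, the composite Z ⊗ X → 𝟙 ⊗ X ≅ X is a weak equivalence. Then the tensor product preserves weak equivalences on the full subcategory M_cI consisting of cofibrant objects together with the unit 𝟙: if f : A → A' and g : B → B' are weak equivalences in M_cI, then f ⊗ g is a weak equivalence. -/
open CategoryTheory Limits MonoidalCategory

universe v u

variable {M : Type u} [Category.{v} M] [MonoidalCategory M] [HasPushouts M] [HasInitial M]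
  [HasBinaryCoproducts M]

/-- The pushout product `(A₁ ⊗ B₂) ⊔_{A₁ ⊗ B₁} (A₂ ⊗ B₁) ⟶ A₂ ⊗ B₂` of two morphisms. -/
noncomputable def pushoutProduct {A₁ A₂ B₁ B₂ : M} (f : A₁ ⟶ A₂) (g : B₁ ⟶ B₂) :
    pushout (A₁ ◁ g) (f ▷ B₁) ⟶ A₂ ⊗ B₂ :=
  pushout.desc (f ▷ B₂) (A₂ ◁ g) (whisker_exchange f g)

/-- Membership in the full subcategory `M_cI`: cofibrant objects together with the unit. -/
def memMcI (Cof : MorphismProperty M) (X : M) : Prop :=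
  Cof (initial.to X) ∨ X = 𝟙_ M

/-!
By the pushout product axiom applied to `⊥ ⟶ B`, tensoring with a cofibrant object sends trivial
cofibrations to weak equivalences, hence, by Ken Brown's lemma, it sends all weak equivalences
between cofibrant objects to weak equivalences. The unit axiom handles weak equivalences from a
cofibrant object to `𝟙`, and a cofibrant replacement `Q ⟶ 𝟙` together with 2-out-of-3 handles
those out of `𝟙`. Tensoring with `𝟙` itself is harmless by the unitors, and
`f ⊗ g = f ▷ B ≫ A' ◁ g` finishes the proof.
-/

section

variable {C : Type*} [Category C]

theorem cof_coprod_inl [HasInitial C] [HasBinaryCoproducts C] {Cof : MorphismProperty C}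
    [Cof.IsStableUnderCobaseChange] (X : C) {Y : C} (hY : Cof (initial.to Y)) :
    Cof (coprod.inl : X ⟶ X ⨿ Y) :=
  Cof.of_isPushout (IsPushout.of_hasBinaryCoproduct' X Y) hY

theorem cof_coprod_inr [HasInitial C] [HasBinaryCoproducts C] {Cof : MorphismProperty C}
    [Cof.IsStableUnderCobaseChange] {X : C} (hX : Cof (initial.to X)) (Y : C) :
    Cof (coprod.inr : Y ⟶ X ⨿ Y) :=
  Cof.of_isPushout (IsPushout.of_hasBinaryCoproduct' X Y).flip hX

/-- Ken Brown's lemma: factor `X ⨿ Y ⟶ Y` as a cofibration `j` followed by a weak equivalence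
`r`; then `F r` is a weak equivalence because it has the section `F (coprod.inr ≫ j)`. -/
theorem map_mem_of_weq_of_cofibrant [HasInitial C] [HasBinaryCoproducts C]
    {Weq Cof : MorphismProperty C} [Weq.HasTwoOutOfThreeProperty] [Weq.ContainsIdentities]
    [Cof.IsStableUnderComposition] [Cof.IsStableUnderCobaseChange]
    (hfact : ∀ {X Y : C} (f : X ⟶ Y),
      ∃ (Z : C) (i : X ⟶ Z) (p : Z ⟶ Y), Cof i ∧ Weq p ∧ i ≫ p = f)
    {D : Type*} [Category D] (F : C ⥤ D) (W : MorphismProperty D)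
    [W.HasTwoOutOfThreeProperty] [W.ContainsIdentities]
    (hF : ∀ {X Y : C} (i : X ⟶ Y), Cof (initial.to X) → Cof i → Weq i → W (F.map i))
    {X Y : C} (p : X ⟶ Y) (hX : Cof (initial.to X)) (hY : Cof (initial.to Y)) (hp : Weq p) :
    W (F.map p) := by
  obtain ⟨Z, j, r, hj, hr, hjr⟩ := hfact (coprod.desc p (𝟙 Y))
  have hpr : (coprod.inl ≫ j) ≫ r = p := by rw [Category.assoc, hjr, coprod.inl_desc]
  have hsr : (coprod.inr ≫ j) ≫ r = 𝟙 Y := by rw [Category.assoc, hjr, coprod.inr_desc]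
  have hFi : W (F.map (coprod.inl ≫ j)) :=
    hF _ hX (Cof.comp_mem _ _ (cof_coprod_inl X hY) hj) (Weq.of_postcomp _ r hr (hpr ▸ hp))
  have hFs : W (F.map (coprod.inr ≫ j)) :=
    hF _ hY (Cof.comp_mem _ _ (cof_coprod_inr hX Y) hj)
      (Weq.of_postcomp _ r hr (hsr ▸ Weq.id_mem Y))
  have hFr : W (F.map r) :=
    W.of_precomp _ _ hFs (by rw [← F.map_comp, hsr, F.map_id]; exact W.id_mem _)
  rw [← hpr, F.map_comp]
  exact W.comp_mem _ _ hFi hFr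

theorem exists_cofibrant_weq [HasInitial C] {Weq Cof : MorphismProperty C}
    (hfact : ∀ {X Y : C} (f : X ⟶ Y),
      ∃ (Z : C) (i : X ⟶ Z) (p : Z ⟶ Y), Cof i ∧ Weq p ∧ i ≫ p = f)
    (Y : C) : ∃ (Q : C) (w : Q ⟶ Y), Cof (initial.to Q) ∧ Weq w := by
  obtain ⟨Q, i, w, hi, hw, -⟩ := hfact (initial.to Y)
  exact ⟨Q, w, Subsingleton.elim i (initial.to Q) ▸ hi, hw⟩

theorem map_mem_of_memMcI [MonoidalCategory C] [HasInitial C] {Weq Cof : MorphismProperty C}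
    [Weq.IsStableUnderComposition] {Q : C} (hQ : Cof (initial.to Q)) (w : Q ⟶ 𝟙_ C)
    (hw : Weq w) {D : Type*} [Category D] (F : C ⥤ D) (W : MorphismProperty D)
    [W.HasOfPrecompProperty W]
    (hF : ∀ {X Y : C} (p : X ⟶ Y), Cof (initial.to X) → memMcI Cof Y → Weq p → W (F.map p))
    {X Y : C} (f : X ⟶ Y) (hX : memMcI Cof X) (hY : memMcI Cof Y) (hf : Weq f) :
    W (F.map f) := by
  rcases hX with hX | rfl
  · exact hF f hX hY hf
  · refine W.of_precomp (F.map w) _ (hF w hQ (Or.inr rfl) hw) ?_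
    rw [← F.map_comp]
    exact hF _ hQ hY (Weq.comp_mem _ _ hw hf)

end

section

variable {C : Type*} [Category C] [MonoidalCategory C] [HasPushouts C] [HasInitial C]

theorem whiskerRight_mem_of_pushoutProduct (W : MorphismProperty C) [W.RespectsIso] {A Z : C}
    (hA : IsInitial (A ⊗ ⊥_ C)) (hZ : IsInitial (Z ⊗ ⊥_ C)) (i : A ⟶ Z) (B : C)
    (h : W (pushoutProduct i (initial.to B))) : W (i ▷ B) := by
  have : IsIso (i ▷ ⊥_ C) := isIso_of_isInitial hA hZ _
  rw [← pushout.inl_desc (i ▷ B) (Z ◁ initial.to B) (whisker_exchange _ _)]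
  exact (W.cancel_left_of_respectsIso _ _).mpr h

theorem whiskerLeft_mem_of_pushoutProduct (W : MorphismProperty C) [W.RespectsIso] {B Z : C}
    (hB : IsInitial ((⊥_ C) ⊗ B)) (hZ : IsInitial ((⊥_ C) ⊗ Z)) (A : C) (i : B ⟶ Z)
    (h : W (pushoutProduct (initial.to A) i)) : W (A ◁ i) := by
  have : IsIso ((⊥_ C) ◁ i) := isIso_of_isInitial hB hZ _
  rw [← pushout.inr_desc (initial.to A ▷ Z) (A ◁ i) (whisker_exchange _ _)]
  exact (W.cancel_left_of_respectsIso _ _).mpr h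

end

section

variable {C : Type*} [Category C] [MonoidalCategory C] [HasPushouts C] [HasInitial C]
  [HasBinaryCoproducts C] {Weq Cof : MorphismProperty C} [Weq.HasTwoOutOfThreeProperty]
  [Weq.ContainsIdentities] [Weq.RespectsIso] [Cof.IsStableUnderComposition]
  [Cof.IsStableUnderCobaseChange]

theorem whiskerRight_weq_mem_of_memMcI
    (hfact : ∀ {X Y : C} (f : X ⟶ Y),
      ∃ (Z : C) (i : X ⟶ Z) (p : Z ⟶ Y), Cof i ∧ Weq p ∧ i ≫ p = f)
    (hinitR : ∀ B : C, IsInitial (B ⊗ (⊥_ C)))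
    (ppa' : ∀ {A₁ A₂ B₁ B₂ : C} (f : A₁ ⟶ A₂) (g : B₁ ⟶ B₂),
      Cof f → Cof g → (Weq f ∨ Weq g) → Weq (pushoutProduct f g))
    (hunitL : ∀ (Z : C), Cof (initial.to Z) → ∀ (w : Z ⟶ 𝟙_ C), Weq w →
      ∀ (X : C), Cof (initial.to X) → Weq ((w ▷ X) ≫ (λ_ X).hom))
    {A A' : C} (f : A ⟶ A') (hA : memMcI Cof A) (hA' : memMcI Cof A') (hf : Weq f)
    {B : C} (hB : memMcI Cof B) : Weq (f ▷ B) := by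
  rcases hB with hB | rfl
  · have hcof : ∀ {X Y : C} (p : X ⟶ Y), Cof (initial.to X) → Cof (initial.to Y) → Weq p →
        Weq (p ▷ B) :=
      map_mem_of_weq_of_cofibrant hfact (tensorRight B) Weq fun i _ hi hwi ↦
        whiskerRight_mem_of_pushoutProduct Weq (hinitR _) (hinitR _) i B
          (ppa' i _ hi hB (Or.inl hwi))
    obtain ⟨Q, w, hQ, hw⟩ := exists_cofibrant_weq hfact (𝟙_ C)
    refine map_mem_of_memMcI hQ w hw (tensorRight B) Weq ?_ f hA hA' hf
    rintro X Y p hX (hY | rfl) hp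
    · exact hcof p hX hY hp
    · exact (Weq.cancel_right_of_respectsIso _ (λ_ B).hom).mp (hunitL X hX p hp B hB)
  · rw [← Weq.cancel_right_of_respectsIso _ (ρ_ A').hom, rightUnitor_naturality,
      Weq.cancel_left_of_respectsIso]
    exact hf

theorem whiskerLeft_weq_mem_of_memMcI
    (hfact : ∀ {X Y : C} (f : X ⟶ Y),
      ∃ (Z : C) (i : X ⟶ Z) (p : Z ⟶ Y), Cof i ∧ Weq p ∧ i ≫ p = f)
    (hinitL : ∀ B : C, IsInitial ((⊥_ C) ⊗ B))
    (ppa' : ∀ {A₁ A₂ B₁ B₂ : C} (f : A₁ ⟶ A₂) (g : B₁ ⟶ B₂),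
      Cof f → Cof g → (Weq f ∨ Weq g) → Weq (pushoutProduct f g))
    (hunitR : ∀ (Z : C), Cof (initial.to Z) → ∀ (w : Z ⟶ 𝟙_ C), Weq w →
      ∀ (X : C), Cof (initial.to X) → Weq ((X ◁ w) ≫ (ρ_ X).hom))
    {B B' : C} (g : B ⟶ B') (hB : memMcI Cof B) (hB' : memMcI Cof B') (hg : Weq g)
    {A : C} (hA : memMcI Cof A) : Weq (A ◁ g) := by
  rcases hA with hA | rfl
  · have hcof : ∀ {X Y : C} (p : X ⟶ Y), Cof (initial.to X) → Cof (initial.to Y) → Weq p →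
        Weq (A ◁ p) :=
      map_mem_of_weq_of_cofibrant hfact (tensorLeft A) Weq fun i _ hi hwi ↦
        whiskerLeft_mem_of_pushoutProduct Weq (hinitL _) (hinitL _) A i
          (ppa' _ i hA hi (Or.inr hwi))
    obtain ⟨Q, w, hQ, hw⟩ := exists_cofibrant_weq hfact (𝟙_ C)
    refine map_mem_of_memMcI hQ w hw (tensorLeft A) Weq ?_ g hB hB' hg
    rintro X Y p hX (hY | rfl) hp
    · exact hcof p hX hY hp
    · exact (Weq.cancel_right_of_respectsIso _ (ρ_ A).hom).mp (hunitR X hX p hp A hA)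
  · rw [← Weq.cancel_right_of_respectsIso _ (λ_ B').hom, leftUnitor_naturality,
      Weq.cancel_left_of_respectsIso]
    exact hg

end

theorem tensor_preserves_weq_on_McI_general
    (Weq Cof : MorphismProperty M)
    [Weq.HasTwoOutOfThreeProperty] [Weq.ContainsIdentities]
    (hWeqIso : Weq.RespectsIso)
    (hCofComp : ∀ {X Y Z : M} (f : X ⟶ Y) (g : Y ⟶ Z), Cof f → Cof g → Cof (f ≫ g))
    (hCofCobase : Cof.IsStableUnderCobaseChange)
    (hfact : ∀ {X Y : M} (f : X ⟶ Y),
      ∃ (Z : M) (i : X ⟶ Z) (p : Z ⟶ Y), Cof i ∧ Weq p ∧ i ≫ p = f)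
    (hinitL : ∀ B : M, IsInitial ((⊥_ M) ⊗ B))
    (hinitR : ∀ B : M, IsInitial (B ⊗ (⊥_ M)))
    (ppa' : ∀ {A₁ A₂ B₁ B₂ : M} (f : A₁ ⟶ A₂) (g : B₁ ⟶ B₂),
      Cof f → Cof g → (Weq f ∨ Weq g) → Weq (pushoutProduct f g))
    (hunitL : ∀ (Z : M), Cof (initial.to Z) → ∀ (w : Z ⟶ 𝟙_ M), Weq w →
      ∀ (X : M), Cof (initial.to X) → Weq ((w ▷ X) ≫ (λ_ X).hom))
    (hunitR : ∀ (Z : M), Cof (initial.to Z) → ∀ (w : Z ⟶ 𝟙_ M), Weq w →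
      ∀ (X : M), Cof (initial.to X) → Weq ((X ◁ w) ≫ (ρ_ X).hom))
    {A A' B B' : M} (f : A ⟶ A') (g : B ⟶ B')
    (hA : memMcI Cof A) (hA' : memMcI Cof A')
    (hB : memMcI Cof B) (hB' : memMcI Cof B')
    (hf : Weq f) (hg : Weq g) :
    Weq (f ⊗ₘ g) := by
  have : Cof.IsStableUnderComposition := ⟨hCofComp⟩
  rw [MonoidalCategory.tensorHom_def]
  exact Weq.comp_mem _ _
    (whiskerRight_weq_mem_of_memMcI hfact hinitR ppa' hunitL f hA hA' hf hB)
    (whiskerLeft_weq_mem_of_memMcI hfact hinitL ppa' hunitR g hB hB' hg hA')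

/-- If the pushout product axiom holds and the unit axiom holds (for every cofibrant `Z`
with a weak equivalence `Z ⟶ 𝟙` and every cofibrant `X`, the composites
`Z ⊗ X ⟶ 𝟙 ⊗ X ≅ X` and `X ⊗ Z ⟶ X ⊗ 𝟙 ≅ X` are weak equivalences), then the tensor
product preserves weak equivalences on the full subcategory `M_cI` of cofibrant objects
together with the unit. -/
theorem tensor_preserves_weq_on_McI
    (Weq Cof : MorphismProperty M)
    [Weq.HasTwoOutOfThreeProperty] [Weq.ContainsIdentities]
    (hCofIso : Cof.RespectsIso) (hWeqIso : Weq.RespectsIso)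
    (hCofComp : ∀ {X Y Z : M} (f : X ⟶ Y) (g : Y ⟶ Z), Cof f → Cof g → Cof (f ≫ g))
    (hCofOfIso : ∀ {X Y : M} (f : X ⟶ Y), IsIso f → Cof f)
    (hCofCobase : Cof.IsStableUnderCobaseChange)
    (hfact : ∀ {X Y : M} (f : X ⟶ Y),
      ∃ (Z : M) (i : X ⟶ Z) (p : Z ⟶ Y), Cof i ∧ Weq p ∧ i ≫ p = f)
    (hinitL : ∀ B : M, IsInitial ((⊥_ M) ⊗ B))
    (hinitR : ∀ B : M, IsInitial (B ⊗ (⊥_ M)))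
    (ppa : ∀ {A₁ A₂ B₁ B₂ : M} (f : A₁ ⟶ A₂) (g : B₁ ⟶ B₂),
      Cof f → Cof g → Cof (pushoutProduct f g))
    (ppa' : ∀ {A₁ A₂ B₁ B₂ : M} (f : A₁ ⟶ A₂) (g : B₁ ⟶ B₂),
      Cof f → Cof g → (Weq f ∨ Weq g) → Weq (pushoutProduct f g))
    (hunitL : ∀ (Z : M), Cof (initial.to Z) → ∀ (w : Z ⟶ 𝟙_ M), Weq w →
      ∀ (X : M), Cof (initial.to X) → Weq ((w ▷ X) ≫ (λ_ X).hom))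
    (hunitR : ∀ (Z : M), Cof (initial.to Z) → ∀ (w : Z ⟶ 𝟙_ M), Weq w →
      ∀ (X : M), Cof (initial.to X) → Weq ((X ◁ w) ≫ (ρ_ X).hom))
    {A A' B B' : M} (f : A ⟶ A') (g : B ⟶ B')
    (hA : memMcI Cof A) (hA' : memMcI Cof A')
    (hB : memMcI Cof B) (hB' : memMcI Cof B')
    (hf : Weq f) (hg : Weq g) :
    Weq (f ⊗ₘ g) :=
  tensor_preserves_weq_on_McI_general Weq Cof hWeqIso hCofComp hCofCobase hfact hinitL hinitR ppa'
    hunitL hunitR f g hA hA' hB hB' hf hg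
end

section
/- In a monoidal model category, the unit axiom for one cofibrant replacement implies it for all: if Q𝟙 → 𝟙 is a trivial fibration with Q𝟙 cofibrant such that Q𝟙 ⊗ X → 𝟙 ⊗ X ≅ X is a weak equivalence for every cofibrant X, then for ANY cofibrant Z with a weak equivalence Z → 𝟙 and any cofibrant X, the map Z ⊗ X → 𝟙 ⊗ X ≅ X is a weak equivalence. -/
/-! Lifting `w : Z ⟶ 𝟙` through the trivial fibration `p : Q ⟶ 𝟙` gives a weak equivalence
`l : Z ⟶ Q` between cofibrant objects with `w = l ≫ p`, so `w ▷ X = (l ▷ X) ≫ (p ▷ X)` and it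
suffices that `l ▷ X` is a weak equivalence. By the pushout product axiom `- ⊗ X` sends trivial
cofibrations to weak equivalences, hence, by Ken Brown's lemma, also every weak equivalence
between cofibrant objects. -/

open CategoryTheory Limits MonoidalCategory

universe v u

variable {M : Type u} [Category.{v} M] [MonoidalCategory M] [HasPushouts M] [HasInitial M]
  [HasBinaryCoproducts M]

/-- Ken Brown's lemma. Factor `coprod.desc f (𝟙 B) = j ≫ s` with `j` a cofibration and `s` a
weak equivalence: `inl ≫ j` and `inr ≫ j` are trivial cofibrations because `A` and `B` are
cofibrant, `f = (inl ≫ j) ≫ s` and `(inr ≫ j) ≫ s = 𝟙 B`. -/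
theorem weq_map_of_weq_of_isCofibrant {C D : Type*} [Category* C] [Category* D]
    [HasInitial C] [HasBinaryCoproducts C] (W Cof : MorphismProperty C) (W' : MorphismProperty D)
    [W.HasTwoOutOfThreeProperty] [W.ContainsIdentities] [Cof.IsStableUnderCobaseChange]
    [W'.HasTwoOutOfThreeProperty] [W'.ContainsIdentities] (F : C ⥤ D)
    (hCofComp : ∀ {X Y Z : C} (f : X ⟶ Y) (g : Y ⟶ Z), Cof f → Cof g → Cof (f ≫ g))
    (hfact : ∀ {X Y : C} (f : X ⟶ Y),
      ∃ (Z : C) (i : X ⟶ Z) (p : Z ⟶ Y), Cof i ∧ W p ∧ i ≫ p = f)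
    (hF : ∀ {X Y : C} (f : X ⟶ Y), Cof f → W f → W' (F.map f))
    {A B : C} (hA : Cof (initial.to A)) (hB : Cof (initial.to B)) (f : A ⟶ B) (hf : W f) :
    W' (F.map f) := by
  obtain ⟨V, j, s, hj, hs, hfac⟩ := hfact (coprod.desc f (𝟙 B))
  have hinl : Cof (coprod.inl : A ⟶ A ⨿ B) :=
    Cof.of_isPushout (IsPushout.of_hasBinaryCoproduct' A B) hB
  have hinr : Cof (coprod.inr : B ⟶ A ⨿ B) :=
    Cof.of_isPushout (IsPushout.of_hasBinaryCoproduct' A B).flip hA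
  have hf_fac : (coprod.inl ≫ j) ≫ s = f := by
    rw [Category.assoc, hfac, coprod.inl_desc]
  have hs_section : (coprod.inr ≫ j) ≫ s = 𝟙 B := by
    rw [Category.assoc, hfac, coprod.inr_desc]
  have hinl_j : W (coprod.inl ≫ j) := W.of_postcomp _ s hs (hf_fac ▸ hf)
  have hinr_j : W (coprod.inr ≫ j) := W.of_postcomp _ s hs (hs_section ▸ W.id_mem B)
  have hFs : W' (F.map s) := by
    refine W'.of_precomp (F.map (coprod.inr ≫ j)) _ (hF _ (hCofComp _ _ hinr hj) hinr_j) ?_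
    rw [← F.map_comp, hs_section, F.map_id]
    exact W'.id_mem _
  rw [← hf_fac, F.map_comp]
  exact W'.comp_mem _ _ (hF _ (hCofComp _ _ hinl hj) hinl_j) hFs

theorem CategoryTheory.MorphismProperty.exists_lift_of_weq {C : Type*} [Category* C]
    [HasInitial C] (W : MorphismProperty C) [W.HasTwoOutOfThreeProperty] {Z Q Y : C}
    (p : Q ⟶ Y) (w : Z ⟶ Y)
    [HasLiftingProperty (initial.to Z) p] (hp : W p) (hw : W w) :
    ∃ l : Z ⟶ Q, l ≫ p = w ∧ W l := by
  have sq : CommSq (initial.to Q) (initial.to Z) p w := ⟨initial.hom_ext _ _⟩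
  exact ⟨sq.lift, sq.fac_right, W.of_postcomp _ p hp (by rwa [sq.fac_right])⟩

/-- `f ▷ X` is the pushout product of `f` with `⊥ ⟶ X`, precomposed with an isomorphism since
`A ⊗ ⊥` and `B ⊗ ⊥` are both initial. -/
theorem weq_whiskerRight_of_cof_of_weq {C : Type*} [Category* C] [MonoidalCategory C]
    [HasPushouts C] [HasInitial C] (W Cof : MorphismProperty C) [W.RespectsIso]
    (hinitR : ∀ B : C, IsInitial (B ⊗ (⊥_ C)))
    (ppa' : ∀ {A₁ A₂ B₁ B₂ : C} (f : A₁ ⟶ A₂) (g : B₁ ⟶ B₂),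
      Cof f → Cof g → (W f ∨ W g) → W (pushoutProduct f g))
    {X : C} (hX : Cof (initial.to X)) {A B : C} (f : A ⟶ B) (hf : Cof f) (hfw : W f) :
    W (f ▷ X) := by
  have : IsIso (f ▷ (⊥_ C)) :=
    ⟨(hinitR B).to _, (hinitR A).hom_ext _ _, (hinitR B).hom_ext _ _⟩
  have hinl : pushout.inl (A ◁ initial.to X) (f ▷ (⊥_ C)) ≫
      pushoutProduct f (initial.to X) = f ▷ X :=
    pushout.inl_desc (f ▷ X) (B ◁ initial.to X) (whisker_exchange _ _)
  rw [← hinl, W.cancel_left_of_respectsIso]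
  exact ppa' f (initial.to X) hf hX (Or.inl hfw)

theorem unit_axiom_of_one_cofibrant_replacement_general
    (Weq Cof Fib : MorphismProperty M)
    [Weq.HasTwoOutOfThreeProperty] [Weq.ContainsIdentities]
    (hWeqIso : Weq.RespectsIso)
    (hCofComp : ∀ {X Y Z : M} (f : X ⟶ Y) (g : Y ⟶ Z), Cof f → Cof g → Cof (f ≫ g))
    (hCofCobase : Cof.IsStableUnderCobaseChange)
    (hfact : ∀ {X Y : M} (f : X ⟶ Y),
      ∃ (Z : M) (i : X ⟶ Z) (p : Z ⟶ Y), Cof i ∧ Weq p ∧ i ≫ p = f)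
    (hlift : ∀ {X Y Z W : M} (i : X ⟶ Y) (p : Z ⟶ W),
      Cof i → Fib p → Weq p → HasLiftingProperty i p)
    (hinitR : ∀ B : M, IsInitial (B ⊗ (⊥_ M)))
    (ppa' : ∀ {A₁ A₂ B₁ B₂ : M} (f : A₁ ⟶ A₂) (g : B₁ ⟶ B₂),
      Cof f → Cof g → (Weq f ∨ Weq g) → Weq (pushoutProduct f g))
    (Q : M) (hQcof : Cof (initial.to Q)) (p : Q ⟶ 𝟙_ M)
    (hpFib : Fib p) (hpWeq : Weq p)
    (hQ : ∀ (X : M), Cof (initial.to X) → Weq ((p ▷ X) ≫ (λ_ X).hom))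
    (Z : M) (hZcof : Cof (initial.to Z)) (w : Z ⟶ 𝟙_ M) (hw : Weq w)
    (X : M) (hXcof : Cof (initial.to X)) :
    Weq ((w ▷ X) ≫ (λ_ X).hom) := by
  obtain ⟨l, hlp, hl⟩ :=
    have := hlift (initial.to Z) p hZcof hpFib hpWeq
    Weq.exists_lift_of_weq p w hpWeq hw
  have hlX : Weq (l ▷ X) :=
    have := hWeqIso
    have := hCofCobase
    weq_map_of_weq_of_isCofibrant Weq Cof Weq (tensorRight X) hCofComp hfact
      (weq_whiskerRight_of_cof_of_weq Weq Cof hinitR ppa' hXcof) hZcof hQcof l hl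
  rw [← hlp, comp_whiskerRight, Category.assoc]
  exact Weq.comp_mem _ _ hlX (hQ X hXcof)

/-- In a monoidal model category, the unit axiom for one cofibrant replacement implies it
for all: if `Q𝟙 ⟶ 𝟙` is a trivial fibration with `Q𝟙` cofibrant such that
`Q𝟙 ⊗ X ⟶ 𝟙 ⊗ X ≅ X` is a weak equivalence for every cofibrant `X`, then for any
cofibrant `Z` with a weak equivalence `Z ⟶ 𝟙` and any cofibrant `X`, the map
`Z ⊗ X ⟶ 𝟙 ⊗ X ≅ X` is a weak equivalence. -/
theorem unit_axiom_of_one_cofibrant_replacement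
    (Weq Cof Fib : MorphismProperty M)
    [Weq.HasTwoOutOfThreeProperty] [Weq.ContainsIdentities]
    (hCofIso : Cof.RespectsIso) (hWeqIso : Weq.RespectsIso)
    (hCofComp : ∀ {X Y Z : M} (f : X ⟶ Y) (g : Y ⟶ Z), Cof f → Cof g → Cof (f ≫ g))
    (hCofOfIso : ∀ {X Y : M} (f : X ⟶ Y), IsIso f → Cof f)
    (hCofCobase : Cof.IsStableUnderCobaseChange)
    (hfact : ∀ {X Y : M} (f : X ⟶ Y),
      ∃ (Z : M) (i : X ⟶ Z) (p : Z ⟶ Y), Cof i ∧ Weq p ∧ i ≫ p = f)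
    (hlift : ∀ {X Y Z W : M} (i : X ⟶ Y) (p : Z ⟶ W),
      Cof i → Fib p → Weq p → HasLiftingProperty i p)
    (hinitL : ∀ B : M, IsInitial ((⊥_ M) ⊗ B))
    (hinitR : ∀ B : M, IsInitial (B ⊗ (⊥_ M)))
    (ppa : ∀ {A₁ A₂ B₁ B₂ : M} (f : A₁ ⟶ A₂) (g : B₁ ⟶ B₂),
      Cof f → Cof g → Cof (pushoutProduct f g))
    (ppa' : ∀ {A₁ A₂ B₁ B₂ : M} (f : A₁ ⟶ A₂) (g : B₁ ⟶ B₂),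
      Cof f → Cof g → (Weq f ∨ Weq g) → Weq (pushoutProduct f g))
    (Q : M) (hQcof : Cof (initial.to Q)) (p : Q ⟶ 𝟙_ M)
    (hpFib : Fib p) (hpWeq : Weq p)
    (hQ : ∀ (X : M), Cof (initial.to X) → Weq ((p ▷ X) ≫ (λ_ X).hom))
    (Z : M) (hZcof : Cof (initial.to Z)) (w : Z ⟶ 𝟙_ M) (hw : Weq w)
    (X : M) (hXcof : Cof (initial.to X)) :
    Weq ((w ▷ X) ≫ (λ_ X).hom) :=
  unit_axiom_of_one_cofibrant_replacement_general Weq Cof Fib hWeqIso hCofComp hCofCobase hfact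
    hlift hinitR ppa' Q hQcof p hpFib hpWeq hQ Z hZcof w hw X hXcof
end
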